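/- arXiv:0810.4933 — 2 statements merged into one kernel-verified Lean document; each statement's English description precedes it below -/
import Mathlib

section
/- Let d ≥ 1, let ν > 0 and λ > 0 be real numbers, let j ≥ 0 be an integer, and let f_0, f_1, …, f_j and g_0, …, g_j be continuous functions on the unit sphere S^{d−1} with f_0 > 0. Define ζ_j := (1/ν) Γ((j+λ)/ν) ∫_{S^{d−1}} f_0(Ω)^{−(j+λ)/ν} Σ_{m=0}^{j} g_{j−m}(Ω) [ Σ_{r=1}^{m} binom(−(j+λ)/ν, r) C_{m,r}(f_1(Ω), …, f_m(Ω)) f_0(Ω)^{−r} ] dσ(Ω), the bracketed inner sum being understood as 1 when m = 0. If j is odd and f_i(−Ω) = (−1)^i f_i(Ω) and g_i(−Ω) = (−1)^i g_i(Ω) for all 0 ≤ i ≤ j and all Ω ∈ S^{d−1}, then ζ_j = 0. -/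
open MeasureTheory Finset

noncomputable section

/-- `Cmr x m r` is `C_{m,r}(x_1, …, x_m)`, the sum over all `r`-tuples `(n_1, …, n_r)` of
positive integers with `n_1 + ⋯ + n_r = m` of the products `x_{n_1} ⋯ x_{n_r}`.
In particular `Cmr x 0 0 = 1`, `Cmr x m 0 = 0` for `m ≥ 1`, and `Cmr x m r = 0` for `m < r`. -/
def Cmr (x : ℕ → ℝ) (m r : ℕ) : ℝ :=
  ∑ n ∈ (Finset.Nat.antidiagonalTuple r m).filter (fun n => ∀ i, 0 < n i), ∏ i, x (n i)

/-- The generalized binomial coefficient `binom(α, r) = α(α−1)⋯(α−r+1)/r!`. -/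
def rBinom (α : ℝ) (r : ℕ) : ℝ :=
  (∏ i ∈ Finset.range r, (α - (i : ℝ))) / (r.factorial : ℝ)

/-- The natural surface measure on the unit sphere `S^{d-1} ⊂ ℝ^d`. -/
def sphereMeasure (d : ℕ) :
    Measure (Metric.sphere (0 : EuclideanSpace ℝ (Fin d)) 1) :=
  (volume : Measure (EuclideanSpace ℝ (Fin d))).toSphere

/-- Parity of `Cmr` under sign flips of the arguments. -/
lemma Cmr_parity (x x' : ℕ → ℝ) (m r : ℕ)
    (h : ∀ i, 1 ≤ i → i ≤ m → x' i = (-1 : ℝ) ^ i * x i) :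
    Cmr x' m r = (-1 : ℝ) ^ m * Cmr x m r := by
  unfold Cmr
  rw [Finset.mul_sum]
  refine Finset.sum_congr rfl fun n hn => ?_
  simp only [Finset.mem_filter, Finset.Nat.mem_antidiagonalTuple] at hn
  obtain ⟨hsum, hpos⟩ := hn
  have hle : ∀ i, n i ≤ m := fun i =>
    hsum ▸ Finset.single_le_sum (f := n) (fun _ _ => Nat.zero_le _) (Finset.mem_univ i)
  calc ∏ i, x' (n i) = ∏ i, ((-1 : ℝ) ^ (n i) * x (n i)) := by
        exact Finset.prod_congr rfl fun i _ => by rw [h (n i) (hpos i) (hle i)]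
    _ = (∏ i, (-1 : ℝ) ^ (n i)) * ∏ i, x (n i) := Finset.prod_mul_distrib
    _ = (-1 : ℝ) ^ m * ∏ i, x (n i) := by
        rw [Finset.prod_pow_eq_pow_sum, hsum]

/-- Negation on the unit sphere as a measurable equivalence. -/
def negSphereEquiv (d : ℕ) :
    Metric.sphere (0 : EuclideanSpace ℝ (Fin d)) 1 ≃ᵐ
      Metric.sphere (0 : EuclideanSpace ℝ (Fin d)) 1 where
  toFun x := -x
  invFun x := -x
  left_inv x := neg_neg x
  right_inv x := neg_neg x
  measurable_toFun := continuous_neg.measurable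
  measurable_invFun := continuous_neg.measurable

open Pointwise in
/-- The sphere measure is invariant under the antipodal map. -/
lemma sphereMeasure_map_neg (d : ℕ) :
    Measure.map (negSphereEquiv d) (sphereMeasure d) = sphereMeasure d := by
  refine Measure.ext fun s hs => ?_
  have hneg : Measurable (fun x : Metric.sphere (0 : EuclideanSpace ℝ (Fin d)) 1 => -x) :=
    continuous_neg.measurable
  have hpre : MeasurableSet ((negSphereEquiv d) ⁻¹' s) := (negSphereEquiv d).measurable hs
  rw [Measure.map_apply (negSphereEquiv d).measurable hs, sphereMeasure,
    Measure.toSphere_apply' _ hpre, Measure.toSphere_apply' _ hs]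
  congr 1
  have himg : (Subtype.val '' ((negSphereEquiv d) ⁻¹' s) : Set (EuclideanSpace ℝ (Fin d)))
      = -(Subtype.val '' s) := by
    ext x
    simp only [Set.mem_image, Set.mem_preimage, Set.mem_neg]
    constructor
    · rintro ⟨y, hy, rfl⟩; exact ⟨-y, hy, by simp [negSphereEquiv]⟩
    · rintro ⟨y, hy, hxy⟩
      refine ⟨-y, by simpa [negSphereEquiv] using hy, ?_⟩
      have : (y : EuclideanSpace ℝ (Fin d)) = -x := hxy
      simp [this]
  have hsmul : Set.Ioo (0 : ℝ) 1 • (-(Subtype.val '' s) : Set (EuclideanSpace ℝ (Fin d)))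
      = -(Set.Ioo (0 : ℝ) 1 • (Subtype.val '' s)) := by
    ext x
    simp only [Set.mem_smul, Set.mem_neg]
    constructor
    · rintro ⟨r, hr, a, ha, rfl⟩; exact ⟨r, hr, -a, by simpa using ha, by simp⟩
    · rintro ⟨r, hr, a, ha, hx⟩
      exact ⟨r, hr, -a, by simpa using ha, by rw [smul_neg, hx, neg_neg]⟩
  rw [himg, hsmul, Measure.measure_neg]

/-- The coefficient `ζ_j` vanishes for `j` odd when the `f_i` and `g_i` have
parity `(−1)^i` under the antipodal map. -/
theorem zeta_odd_eq_zero
    {d : ℕ} (hd : 1 ≤ d) (ν lam : ℝ) (hν : 0 < ν) (hlam : 0 < lam) (j : ℕ)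
    (F G : ℕ → Metric.sphere (0 : EuclideanSpace ℝ (Fin d)) 1 → ℝ)
    (hFcont : ∀ i ≤ j, Continuous (F i)) (hGcont : ∀ i ≤ j, Continuous (G i))
    (hF0pos : ∀ Ω, 0 < F 0 Ω)
    (ζ : ℝ)
    (hζ : ζ = (1 / ν) * Real.Gamma (((j : ℝ) + lam) / ν) *
      ∫ Ω, (F 0 Ω) ^ (-(((j : ℝ) + lam) / ν)) *
          ∑ m ∈ Finset.range (j + 1), G (j - m) Ω *
            (if m = 0 then (1 : ℝ) else
              ∑ r ∈ Finset.Icc 1 m,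
                rBinom (-(((j : ℝ) + lam) / ν)) r * Cmr (fun i => F i Ω) m r / (F 0 Ω) ^ r)
        ∂(sphereMeasure d))
    (hjodd : Odd j)
    (hFparity : ∀ i ≤ j, ∀ Ω, F i (-Ω) = (-1 : ℝ) ^ i * F i Ω)
    (hGparity : ∀ i ≤ j, ∀ Ω, G i (-Ω) = (-1 : ℝ) ^ i * G i Ω) :
    ζ = 0 := by
  set p : ℝ := -(((j : ℝ) + lam) / ν) with hp
  set f : Metric.sphere (0 : EuclideanSpace ℝ (Fin d)) 1 → ℝ := fun Ω =>
    (F 0 Ω) ^ p *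
      ∑ m ∈ Finset.range (j + 1), G (j - m) Ω *
        (if m = 0 then (1 : ℝ) else
          ∑ r ∈ Finset.Icc 1 m,
            rBinom p r * Cmr (fun i => F i Ω) m r / (F 0 Ω) ^ r) with hf
  -- key pointwise parity
  have key : ∀ Ω, f (-Ω) = -f Ω := by
    intro Ω
    have hF0 : F 0 (-Ω) = F 0 Ω := by simpa using hFparity 0 (Nat.zero_le j) Ω
    have hsum : (∑ m ∈ Finset.range (j + 1), G (j - m) (-Ω) *
        (if m = 0 then (1 : ℝ) else
          ∑ r ∈ Finset.Icc 1 m,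
            rBinom p r * Cmr (fun i => F i (-Ω)) m r / (F 0 Ω) ^ r))
        = -∑ m ∈ Finset.range (j + 1), G (j - m) Ω *
        (if m = 0 then (1 : ℝ) else
          ∑ r ∈ Finset.Icc 1 m,
            rBinom p r * Cmr (fun i => F i Ω) m r / (F 0 Ω) ^ r) := by
      rw [← Finset.sum_neg_distrib]
      refine Finset.sum_congr rfl fun m hm => ?_
      have hmj : m ≤ j := Nat.lt_succ_iff.mp (Finset.mem_range.mp hm)
      have hG : G (j - m) (-Ω) = (-1 : ℝ) ^ (j - m) * G (j - m) Ω :=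
        hGparity (j - m) (Nat.sub_le j m) Ω
      have hT : (if m = 0 then (1 : ℝ) else
          ∑ r ∈ Finset.Icc 1 m,
            rBinom p r * Cmr (fun i => F i (-Ω)) m r / (F 0 Ω) ^ r)
          = (-1 : ℝ) ^ m * (if m = 0 then (1 : ℝ) else
          ∑ r ∈ Finset.Icc 1 m,
            rBinom p r * Cmr (fun i => F i Ω) m r / (F 0 Ω) ^ r) := by
        by_cases hm0 : m = 0
        · simp [hm0]
        · simp only [hm0, if_false]
          rw [Finset.mul_sum]
          refine Finset.sum_congr rfl fun r _ => ?_
          rw [Cmr_parity (fun i => F i Ω) (fun i => F i (-Ω)) m r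
            (fun i h1 h2 => hFparity i (h2.trans hmj) Ω)]
          ring
      have hpow : (-1 : ℝ) ^ (j - m) * (-1 : ℝ) ^ m = -1 := by
        rw [← pow_add, Nat.sub_add_cancel hmj, hjodd.neg_one_pow]
      have hfactor : ∀ a b : ℝ, ((-1 : ℝ) ^ (j - m) * a) * ((-1 : ℝ) ^ m * b)
          = ((-1 : ℝ) ^ (j - m) * (-1 : ℝ) ^ m) * (a * b) := fun a b => by ring
      rw [hG, hT, hfactor, hpow, neg_one_mul]
    rw [hf]
    simp only
    rw [hF0, hsum, mul_neg]
  -- the integral vanishes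
  have hint : (∫ Ω, f Ω ∂(sphereMeasure d)) = 0 := by
    have h1 : (∫ Ω, f Ω ∂(sphereMeasure d)) = ∫ Ω, f ((negSphereEquiv d) Ω) ∂(sphereMeasure d) := by
      conv_lhs => rw [← sphereMeasure_map_neg d]
      rw [MeasureTheory.integral_map_equiv]
    have h2 : (∫ Ω, f ((negSphereEquiv d) Ω) ∂(sphereMeasure d))
        = -∫ Ω, f Ω ∂(sphereMeasure d) := by
      rw [← MeasureTheory.integral_neg]
      refine integral_congr_ae (Filter.Eventually.of_forall fun Ω => ?_)
      exact key Ω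
    have := h1.trans h2
    linarith
  have hzero : integral (sphereMeasure d) f = 0 := hint
  rw [hζ, hzero, mul_zero]

end
end

section
/- Let d ≥ 1 and let A be a symmetric positive-definite d × d real matrix. Then ∫_{S^{d−1}} ⟨AΩ, Ω⟩^{−d/2} dσ(Ω) = (det A)^{−1/2} · σ(S^{d−1}), where ⟨·,·⟩ is the standard inner product on ℝ^d. -/
/-! Write `A = Bᵀ B` with `B` invertible, so that `⟨AΩ, Ω⟩^{-d/2} = ‖BΩ‖^{-d}` and
`(det A)^{-1/2} = |det B|⁻¹`. Integrating `exp (-‖B x‖)` over `ℝ^d` in polar coordinates gives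
`Γ(d) ∫_{S^{d-1}} ‖BΩ‖^{-d} dσ`, while the substitution `y = B x` gives
`|det B|⁻¹ ∫ exp (-‖y‖) dy = |det B|⁻¹ Γ(d) σ(S^{d-1})`. -/

open MeasureTheory Finset

noncomputable section

open Set Metric Real Module

theorem integral_volumeIoiPow {F : Type*} [NormedAddCommGroup F] [NormedSpace ℝ F]
    (n : ℕ) (f : ℝ → F) :
    ∫ r : Ioi (0 : ℝ), f r ∂Measure.volumeIoiPow n = ∫ r in Ioi (0 : ℝ), r ^ n • f r := by
  simp only [Measure.volumeIoiPow, ENNReal.ofReal]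
  rw [integral_withDensity_eq_integral_smul ((measurable_subtype_coe.pow_const _).real_toNNReal),
    integral_subtype_comap measurableSet_Ioi fun r ↦ Real.toNNReal (r ^ n) • f r]
  refine setIntegral_congr_fun measurableSet_Ioi fun r hr ↦ ?_
  rw [NNReal.smul_def, Real.coe_toNNReal _ (pow_nonneg hr.out.le _)]

section Polar

variable {E F : Type*} [NormedAddCommGroup E] [NormedSpace ℝ E] [FiniteDimensional ℝ E]
  [MeasurableSpace E] [BorelSpace E] [Nontrivial E] [NormedAddCommGroup F] [NormedSpace ℝ F]
  (μ : Measure E) [μ.IsAddHaarMeasure]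

theorem integral_eq_integral_toSphere_integral_Ioi {f : E → F} (hf : Integrable f μ) :
    ∫ x, f x ∂μ =
      ∫ ω, (∫ r in Ioi (0 : ℝ), r ^ (finrank ℝ E - 1) • f (r • (ω : E))) ∂μ.toSphere := by
  have hmp := μ.measurePreserving_homeomorphUnitSphereProd
  have hemb := (homeomorphUnitSphereProd E).measurableEmbedding
  set g : sphere (0 : E) 1 × Ioi (0 : ℝ) → F := fun p ↦ f ((p.2 : ℝ) • (p.1 : E))
  have hg : g ∘ homeomorphUnitSphereProd E = f ∘ Subtype.val := by
    funext x
    simp [g, smul_inv_smul₀ (norm_ne_zero_iff.2 x.2)]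
  have hg_int : Integrable g (μ.toSphere.prod (.volumeIoiPow (finrank ℝ E - 1))) := by
    rw [← hmp.integrable_comp_emb hemb, hg]
    exact (integrableOn_iff_comap_subtypeVal (measurableSet_singleton 0).compl).1 hf.integrableOn
  calc ∫ x, f x ∂μ = ∫ x : ({0}ᶜ : Set E), f x ∂μ.comap (↑) := by
        rw [integral_subtype_comap (measurableSet_singleton _).compl, restrict_compl_singleton]
    _ = ∫ p, g p ∂μ.toSphere.prod (.volumeIoiPow (finrank ℝ E - 1)) := by
        rw [← hmp.integral_comp hemb]
        exact congrArg _ (funext fun x ↦ (congrFun hg x).symm)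
    _ = _ := by
        rw [integral_prod g hg_int]
        exact congrArg _ (funext fun ω ↦ integral_volumeIoiPow _ fun r ↦ f (r • (ω : E)))

theorem integral_exp_neg_eq_of_homogeneous {Q : E → ℝ} {p : ℝ} (hp : 0 < p)
    (hQ_pos : ∀ x, x ≠ 0 → 0 < Q x) (hQ_hom : ∀ r : ℝ, 0 < r → ∀ x, Q (r • x) = r ^ p * Q x)
    (hQ_int : Integrable (fun x ↦ exp (-Q x)) μ) :
    ∫ x, exp (-Q x) ∂μ =
      (∫ ω, Q ω ^ (-(finrank ℝ E : ℝ) / p) ∂μ.toSphere) * (1 / p * Gamma (finrank ℝ E / p)) := by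
  have hn : 0 < finrank ℝ E := finrank_pos
  have hq : -1 < (finrank ℝ E : ℝ) - 1 := by linarith [(Nat.cast_pos.2 hn : (0 : ℝ) < _)]
  rw [integral_eq_integral_toSphere_integral_Ioi μ hQ_int, ← integral_mul_const]
  refine integral_congr_ae (.of_forall fun ω ↦ ?_)
  have hω : 0 < Q ω := hQ_pos _ (ne_of_mem_sphere ω.2 one_ne_zero)
  calc ∫ r in Ioi (0 : ℝ), r ^ (finrank ℝ E - 1) • exp (-Q (r • (ω : E)))
      = ∫ r in Ioi (0 : ℝ), r ^ ((finrank ℝ E : ℝ) - 1) * exp (-Q ω * r ^ p) := by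
        refine setIntegral_congr_fun measurableSet_Ioi fun r (hr : 0 < r) ↦ ?_
        rw [hQ_hom r hr, ← Nat.cast_pred hn, rpow_natCast, smul_eq_mul, neg_mul, mul_comm (r ^ p)]
    _ = _ := by
        rw [integral_rpow_mul_exp_neg_mul_rpow hp hq hω, sub_add_cancel, mul_assoc]

theorem integrable_exp_neg_norm : Integrable (fun x : E ↦ exp (-‖x‖)) μ := by
  have hn : 0 < finrank ℝ E := finrank_pos
  rw [integrable_fun_norm_addHaar μ (f := fun r ↦ exp (-r))]
  refine (GammaIntegral_convergent (Nat.cast_pos.2 hn)).congr_fun (fun r _ ↦ ?_) measurableSet_Ioi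
  dsimp only
  rw [← Nat.cast_pred hn, rpow_natCast, smul_eq_mul, mul_comm]

end Polar

section LinearChangeOfVariables

variable {E F : Type*} [NormedAddCommGroup E] [NormedSpace ℝ E] [FiniteDimensional ℝ E]
  [MeasurableSpace E] [BorelSpace E] [NormedAddCommGroup F]
  (μ : Measure E) [μ.IsAddHaarMeasure] {L : E →ₗ[ℝ] E}

theorem LinearMap.measurableEmbedding_of_det_ne_zero (hL : LinearMap.det L ≠ 0) :
    MeasurableEmbedding L :=
  (L.equivOfDetNeZero hL).toContinuousLinearEquiv.toHomeomorph.measurableEmbedding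

theorem integral_comp_linearMap [NormedSpace ℝ F] (hL : LinearMap.det L ≠ 0) (g : E → F) :
    ∫ x, g (L x) ∂μ = |(LinearMap.det L)⁻¹| • ∫ y, g y ∂μ := by
  rw [← (L.measurableEmbedding_of_det_ne_zero hL).integral_map,
    Measure.map_linearMap_addHaar_eq_smul_addHaar μ hL, integral_smul_measure,
    ENNReal.toReal_ofReal (abs_nonneg _)]

theorem MeasureTheory.Integrable.comp_linearMap (hL : LinearMap.det L ≠ 0) {g : E → F}
    (hg : Integrable g μ) : Integrable (fun x ↦ g (L x)) μ := by
  rw [← Function.comp_def, ← (L.measurableEmbedding_of_det_ne_zero hL).integrable_map_iff,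
    Measure.map_linearMap_addHaar_eq_smul_addHaar μ hL]
  exact hg.smul_measure ENNReal.ofReal_ne_top

theorem integral_toSphere_norm_comp_linearMap_rpow [Nontrivial E] (hL : LinearMap.det L ≠ 0) :
    ∫ ω, ‖L ω‖ ^ (-(finrank ℝ E : ℝ)) ∂μ.toSphere =
      |(LinearMap.det L)⁻¹| * μ.toSphere.real univ := by
  have polar : ∀ M : E →ₗ[ℝ] E, LinearMap.det M ≠ 0 → ∫ x, exp (-‖M x‖) ∂μ =
      (∫ ω, ‖M ω‖ ^ (-(finrank ℝ E : ℝ)) ∂μ.toSphere) * Gamma (finrank ℝ E) := fun M hM ↦ by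
    have := integral_exp_neg_eq_of_homogeneous μ one_pos
      (fun x hx ↦ norm_pos_iff.2 fun h ↦ hx ((M.measurableEmbedding_of_det_ne_zero hM).injective
        (h.trans M.map_zero.symm)))
      (fun r hr x ↦ by rw [M.map_smul, norm_smul, norm_of_nonneg hr.le, rpow_one])
      ((integrable_exp_neg_norm μ).comp_linearMap μ hM)
    simpa only [div_one, one_mul] using this
  have hΓ : Gamma (finrank ℝ E) ≠ 0 := (Gamma_pos_of_pos (Nat.cast_pos.2 finrank_pos)).ne'
  have hsphere : ∫ ω, ‖(ω : E)‖ ^ (-(finrank ℝ E : ℝ)) ∂μ.toSphere = μ.toSphere.real univ := by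
    simp [norm_eq_of_mem_sphere]
  have hid := polar LinearMap.id (by rw [LinearMap.det_id]; exact one_ne_zero)
  simp only [LinearMap.id_apply, hsphere] at hid
  refine mul_right_cancel₀ hΓ ?_
  rw [← polar L hL, integral_comp_linearMap μ hL fun y ↦ exp (-‖y‖), hid, smul_eq_mul, mul_assoc]

end LinearChangeOfVariables

namespace Matrix

variable {m n : Type*} [Fintype m] [Fintype n] [DecidableEq n]

open scoped MatrixOrder in
theorem PosDef.exists_isUnit_eq_transpose_mul_self {A : Matrix n n ℝ} (hA : A.PosDef) :
    ∃ B : Matrix n n ℝ, IsUnit B ∧ A = Bᵀ * B :=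
  CStarAlgebra.isStrictlyPositive_iff_eq_star_mul_self.mp hA.isStrictlyPositive

theorem sum_transpose_mul_self_mulVec_mul_eq_norm_sq (B : Matrix m n ℝ) (x : EuclideanSpace ℝ n) :
    ∑ i, (∑ k, (Bᵀ * B) i k * x k) * x i = ‖toEuclideanLin B x‖ ^ 2 := by
  rw [EuclideanSpace.norm_sq_eq]
  change (Bᵀ * B) *ᵥ x.ofLp ⬝ᵥ x.ofLp = ∑ i, ‖(B *ᵥ x.ofLp) i‖ ^ 2
  rw [← mulVec_mulVec, dotProduct_comm, dotProduct_mulVec, vecMul_transpose]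
  simp only [dotProduct, Real.norm_eq_abs, sq, abs_mul_abs_self]

theorem det_toEuclideanLin (B : Matrix n n ℝ) : LinearMap.det (toEuclideanLin B) = B.det := by
  rw [toEuclideanLin, toLpLin_eq_toLin, LinearMap.det_toLin]

theorem det_transpose_mul_self (B : Matrix n n ℝ) : (Bᵀ * B).det = B.det ^ 2 := by
  rw [det_mul, det_transpose, sq]

end Matrix

theorem sq_rpow_neg_one_half (x : ℝ) : (x ^ 2) ^ (-(1 : ℝ) / 2) = |x|⁻¹ := by
  rw [← sq_abs, ← rpow_natCast, ← rpow_mul (abs_nonneg x)]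
  norm_num [rpow_neg_one]

theorem integral_sphere_quadratic_form_rpow_general
    {d : ℕ} (hd : 1 ≤ d) (A : Matrix (Fin d) (Fin d) ℝ)
    (hpos : A.PosDef) :
    (∫ Ω : Metric.sphere (0 : EuclideanSpace ℝ (Fin d)) 1,
        (∑ i, (∑ k, A i k * (Ω : EuclideanSpace ℝ (Fin d)) k) *
            (Ω : EuclideanSpace ℝ (Fin d)) i) ^ (-(d : ℝ) / 2)
        ∂(sphereMeasure d)) =
      A.det ^ (-(1 : ℝ) / 2) * ((sphereMeasure d) Set.univ).toReal := by
  have : Nonempty (Fin d) := ⟨⟨0, hd⟩⟩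
  obtain ⟨B, hB, rfl⟩ := hpos.exists_isUnit_eq_transpose_mul_self
  have hdet : LinearMap.det (Matrix.toEuclideanLin B) ≠ 0 := by
    rw [Matrix.det_toEuclideanLin]
    exact (Matrix.isUnit_iff_isUnit_det B).1 hB |>.ne_zero
  calc _ = ∫ Ω, ‖Matrix.toEuclideanLin B Ω‖ ^ (-(d : ℝ)) ∂sphereMeasure d := by
        refine integral_congr_ae (.of_forall fun Ω ↦ ?_)
        dsimp only
        rw [Matrix.sum_transpose_mul_self_mulVec_mul_eq_norm_sq, ← rpow_natCast,
          ← rpow_mul (norm_nonneg _)]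
        ring_nf
    _ = |B.det|⁻¹ * (sphereMeasure d).real univ := by
        have := integral_toSphere_norm_comp_linearMap_rpow volume hdet
        rwa [finrank_euclideanSpace_fin, Matrix.det_toEuclideanLin, abs_inv] at this
    _ = _ := by
        rw [Matrix.det_transpose_mul_self, sq_rpow_neg_one_half, measureReal_def]

/-- For a symmetric positive-definite matrix `A`,
`∫_{S^{d−1}} ⟨AΩ, Ω⟩^{−d/2} dσ(Ω) = (det A)^{−1/2} σ(S^{d−1})`. -/
theorem integral_sphere_quadratic_form_rpow
    {d : ℕ} (hd : 1 ≤ d) (A : Matrix (Fin d) (Fin d) ℝ)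
    (hsymm : A.IsSymm) (hpos : A.PosDef) :
    (∫ Ω : Metric.sphere (0 : EuclideanSpace ℝ (Fin d)) 1,
        (∑ i, (∑ k, A i k * (Ω : EuclideanSpace ℝ (Fin d)) k) *
            (Ω : EuclideanSpace ℝ (Fin d)) i) ^ (-(d : ℝ) / 2)
        ∂(sphereMeasure d)) =
      A.det ^ (-(1 : ℝ) / 2) * ((sphereMeasure d) Set.univ).toReal :=
  integral_sphere_quadratic_form_rpow_general hd A hpos

end
end
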